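/- Let u be positive-definite satisfying D(φu) = ψu, with Sobolev orthogonal polynomials (Q_n) for ⟨p,r⟩_S = ⟨u, pr⟩ + λ⟨u, p'r'⟩, λ > 0, H = max{deg ψ − 1, deg φ}, and 𝒥r = φr + λ(φ'−ψ)r' − λφr''. Then for n ≥ H, the polynomial 𝒥Q_n lies in the span of {Q_{n−H}, …, Q_{n+H}}: its Sobolev-Fourier coefficients ⟨𝒥Q_n, Q_ν⟩_S / ⟨Q_ν, Q_ν⟩_S vanish for ν < n − H. -/

import Mathlib

/-!
`𝒥` is symmetric for `⟨·,·⟩_S`: the defect `⟨𝒥p, r⟩_S − ⟨p, 𝒥r⟩_S` is `u` applied to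
`λ(ψw₁ + φw₁') + λ²(ψw₂ + φw₂')` for explicit `w₁, w₂`, and the Pearson equation
`D(φu) = ψu` says exactly that `u` kills `ψw + φw'`. Hence
`⟨𝒥Q_n, Q_ν⟩_S = ⟨Q_n, 𝒥Q_ν⟩_S`, and `𝒥Q_ν` has degree at most `ν + H < n`, so it lies in the
span of `Q_0, …, Q_{n-1}`, all of which are `S`-orthogonal to `Q_n`.
-/

open Polynomial

section

variable {R : Type*} [CommRing R]

noncomputable def sobolevForm (u : R[X] →ₗ[R] R) (lam : R) : R[X] →ₗ[R] R[X] →ₗ[R] R :=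
  (LinearMap.mul R R[X]).compr₂ u
    + lam • ((LinearMap.mul R R[X]).compl₁₂ derivative derivative).compr₂ u

lemma sobolevForm_apply (u : R[X] →ₗ[R] R) (lam : R) (a b : R[X]) :
    sobolevForm u lam a b = u (a * b) + lam * u (derivative a * derivative b) :=
  rfl

noncomputable def jOperator (φ ψ : R[X]) (lam : R) (p : R[X]) : R[X] :=
  φ * p + C lam * (derivative φ - ψ) * derivative p - C lam * φ * derivative (derivative p)

lemma jOperator_lagrange_identity (φ ψ : R[X]) (lam : R) (p r : R[X]) :
    let pearson : R[X] → R[X] := fun w => ψ * w + φ * derivative w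
    jOperator φ ψ lam p * r + C lam * (derivative (jOperator φ ψ lam p) * derivative r)
      = p * jOperator φ ψ lam r + C lam * (derivative p * derivative (jOperator φ ψ lam r))
        - C lam * pearson (derivative p * r - p * derivative r)
        - C lam * (C lam * pearson (derivative (derivative p) * derivative r
            - derivative p * derivative (derivative r))) := by
  simp only [jOperator, derivative_mul, derivative_add, derivative_sub, derivative_C, zero_mul,
    zero_add]
  ring

lemma sobolevForm_jOperator_comm (u : R[X] →ₗ[R] R) {φ ψ : R[X]} (lam : R)
    (heq : ∀ r : R[X], -(u (φ * derivative r)) = u (ψ * r)) (p r : R[X]) :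
    sobolevForm u lam (jOperator φ ψ lam p) r = sobolevForm u lam p (jOperator φ ψ lam r) := by
  have u_C_mul (c : R) (x : R[X]) : u (C c * x) = c * u x := by
    rw [← smul_eq_C_mul, map_smul, smul_eq_mul]
  have u_pearson (w : R[X]) : u (ψ * w + φ * derivative w) = 0 := by
    rw [map_add, ← heq, neg_add_cancel]
  rw [sobolevForm_apply, sobolevForm_apply, ← u_C_mul, ← u_C_mul, ← map_add, ← map_add,
    jOperator_lagrange_identity, map_sub, map_sub, u_C_mul, u_C_mul, u_pearson, u_C_mul,
    u_pearson]
  ring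

lemma natDegree_jOperator_le (φ ψ : R[X]) (lam : R) (p : R[X]) :
    (jOperator φ ψ lam p).natDegree ≤ p.natDegree + max (ψ.natDegree - 1) φ.natDegree := by
  set H := max (ψ.natDegree - 1) φ.natDegree
  have hφ : φ.natDegree ≤ H := le_max_right _ _
  have hψ : ψ.natDegree ≤ H + 1 := by have := le_max_left (ψ.natDegree - 1) φ.natDegree; omega
  have hφ' : (derivative φ - ψ).natDegree ≤ H + 1 :=
    (natDegree_sub_le _ _).trans (max_le ((natDegree_derivative_le φ).trans (by omega)) hψ)
  have hp' : (derivative (derivative p)).natDegree ≤ p.natDegree :=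
    (natDegree_derivative_le _).trans ((Nat.sub_le _ _).trans
      ((natDegree_derivative_le p).trans (Nat.sub_le _ _)))
  have first_order : (C lam * (derivative φ - ψ) * derivative p).natDegree ≤ p.natDegree + H := by
    rcases eq_or_ne p.natDegree 0 with hp | hp
    · rw [derivative_of_natDegree_zero hp, mul_zero, natDegree_zero]
      exact Nat.zero_le _
    · refine natDegree_mul_le_of_le ((natDegree_C_mul_le _ _).trans hφ')
        (natDegree_derivative_le p) |>.trans ?_
      omega
  refine natDegree_sub_le_of_le (natDegree_add_le_of_degree_le ?_ first_order) ?_ |>.trans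
    (max_self _).le
  · exact natDegree_mul_le_of_le hφ le_rfl |>.trans (add_comm _ _).le
  · exact natDegree_mul_le_of_le ((natDegree_C_mul_le _ _).trans hφ) hp' |>.trans
      (add_comm _ _).le

lemma sobolevForm_eq_zero_of_natDegree_lt [Nontrivial R] {u : R[X] →ₗ[R] R} {lam : R}
    {Q : ℕ → R[X]} (hQmonic : ∀ n, (Q n).Monic) (hQdeg : ∀ n, (Q n).natDegree = n)
    (hQorth : ∀ n m, n ≠ m → sobolevForm u lam (Q n) (Q m) = 0) {n : ℕ} {p : R[X]}
    (hp : p.natDegree < n) : sobolevForm u lam (Q n) p = 0 := by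
  let S : Sequence R := ⟨Q, fun i => by rw [degree_eq_natDegree (hQmonic i).ne_zero, hQdeg]⟩
  have hspan : Submodule.span R (Q '' Set.Iio n) = degreeLT R n :=
    S.span_degreeLT fun i _ => by rw [(hQmonic i).leadingCoeff]; exact isUnit_one
  have hker : degreeLT R n ≤ LinearMap.ker (sobolevForm u lam (Q n)) := by
    rw [← hspan, Submodule.span_le]
    rintro _ ⟨m, hm, rfl⟩
    exact hQorth n m (Set.mem_Iio.mp hm).ne'
  refine hker (mem_degreeLT.mpr ((degree_le_natDegree).trans_lt ?_))
  exact_mod_cast hp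

end

theorem J_Qn_expansion_in_Qn_general (u : Polynomial ℝ →ₗ[ℝ] ℝ) (φ ψ : Polynomial ℝ)
    (lam : ℝ)
    (heq : ∀ r : Polynomial ℝ, -(u (φ * derivative r)) = u (ψ * r))
    (Q : ℕ → Polynomial ℝ)
    (hQmonic : ∀ n, (Q n).Monic) (hQdeg : ∀ n, (Q n).natDegree = n)
    (hQorth : ∀ n m, n ≠ m →
      u (Q n * Q m) + lam * u (derivative (Q n) * derivative (Q m)) = 0) :
    ∀ n ν : ℕ, max (ψ.natDegree - 1) φ.natDegree ≤ n →
      ν + max (ψ.natDegree - 1) φ.natDegree < n →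
      (fun a b : Polynomial ℝ => u (a * b) + lam * u (derivative a * derivative b))
        (φ * Q n + C lam * (derivative φ - ψ) * derivative (Q n)
          - C lam * φ * derivative (derivative (Q n))) (Q ν) = 0 := by
  intro n ν _ hν
  change sobolevForm u lam (jOperator φ ψ lam (Q n)) (Q ν) = 0
  rw [sobolevForm_jOperator_comm u lam heq]
  refine sobolevForm_eq_zero_of_natDegree_lt hQmonic hQdeg hQorth ?_
  exact (natDegree_jOperator_le φ ψ lam (Q ν)).trans_lt (by rwa [hQdeg])

/-- In the semiclassical Sobolev setting, for n ≥ H the polynomial 𝒥Q_n lies in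
the span of Q_{n−H}, …, Q_{n+H}: its Sobolev–Fourier coefficients against Q_ν
vanish when ν + H < n, where H = max{deg ψ − 1, deg φ} and
𝒥r = φr + λ(φ'−ψ)r' − λφr''. -/
theorem J_Qn_expansion_in_Qn (u : Polynomial ℝ →ₗ[ℝ] ℝ) (φ ψ : Polynomial ℝ)
    (lam : ℝ) (hlam : 0 < lam)
    (hpos : ∀ q : Polynomial ℝ, q ≠ 0 → 0 < u (q * q))
    (heq : ∀ r : Polynomial ℝ, -(u (φ * derivative r)) = u (ψ * r))
    (Q : ℕ → Polynomial ℝ)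
    (hQmonic : ∀ n, (Q n).Monic) (hQdeg : ∀ n, (Q n).natDegree = n)
    (hQorth : ∀ n m, n ≠ m →
      u (Q n * Q m) + lam * u (derivative (Q n) * derivative (Q m)) = 0) :
    ∀ n ν : ℕ, max (ψ.natDegree - 1) φ.natDegree ≤ n →
      ν + max (ψ.natDegree - 1) φ.natDegree < n →
      (fun a b : Polynomial ℝ => u (a * b) + lam * u (derivative a * derivative b))
        (φ * Q n + C lam * (derivative φ - ψ) * derivative (Q n)
          - C lam * φ * derivative (derivative (Q n))) (Q ν) = 0 :=
  J_Qn_expansion_in_Qn_general u φ ψ lam heq Q hQmonic hQdeg hQorth
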